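/- For all positive integers d and a, the set S₄ = {0, 2d, 3d, 4d, 4d+a, 6d+a} satisfies |S₄+S₄| ≤ |S₄-S₄| (i.e., S₄ is not sum-dominant). -/
import Mathlib


open Finset
open scoped Pointwise

set_option maxHeartbeats 1000000 in
theorem stmt_8 (d a : ℤ) (hd : 0 < d) (ha : 0 < a) :
    ((({0, 2*d, 3*d, 4*d, 4*d+a, 6*d+a} : Finset ℤ)) + {0, 2*d, 3*d, 4*d, 4*d+a, 6*d+a}).card ≤ ((({0, 2*d, 3*d, 4*d, 4*d+a, 6*d+a} : Finset ℤ)) - {0, 2*d, 3*d, 4*d, 4*d+a, 6*d+a}).card := by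
  by_cases h1 : a = d
  · subst h1
    have hup : (({0, 2*a, 3*a, 4*a, 4*a+a, 6*a+a} : Finset ℤ) + {0, 2*a, 3*a, 4*a, 4*a+a, 6*a+a}) ⊆ ([0*a, 2*a, 3*a, 4*a, 5*a, 6*a, 7*a, 8*a, 9*a, 10*a, 11*a, 12*a, 14*a] : List ℤ).toFinset := by
      intro x hx
      simp only [Finset.mem_add, Finset.mem_insert, Finset.mem_singleton] at hx
      obtain ⟨y, hy, z, hz, rfl⟩ := hx
      simp only [List.mem_toFinset, List.mem_cons, List.not_mem_nil, or_false]
      omega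
    have hlow : ({0, 1*a, -(1*a), 2*a, -(2*a), 3*a, -(3*a), 4*a, -(4*a), 5*a, -(5*a), 7*a, -(7*a)} : Finset ℤ) ⊆ (({0, 2*a, 3*a, 4*a, 4*a+a, 6*a+a} : Finset ℤ) - {0, 2*a, 3*a, 4*a, 4*a+a, 6*a+a}) := by
      simp only [Finset.insert_subset_iff, Finset.singleton_subset_iff]
      exact ⟨Finset.mem_sub.mpr ⟨0, by simp, 0, by simp, by ring⟩,
        Finset.mem_sub.mpr ⟨3*a, by simp, 2*a, by simp, by ring⟩,
        Finset.mem_sub.mpr ⟨2*a, by simp, 3*a, by simp, by ring⟩,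
        Finset.mem_sub.mpr ⟨2*a, by simp, 0, by simp, by ring⟩,
        Finset.mem_sub.mpr ⟨0, by simp, 2*a, by simp, by ring⟩,
        Finset.mem_sub.mpr ⟨3*a, by simp, 0, by simp, by ring⟩,
        Finset.mem_sub.mpr ⟨0, by simp, 3*a, by simp, by ring⟩,
        Finset.mem_sub.mpr ⟨4*a, by simp, 0, by simp, by ring⟩,
        Finset.mem_sub.mpr ⟨0, by simp, 4*a, by simp, by ring⟩,
        Finset.mem_sub.mpr ⟨4*a+a, by simp, 0, by simp, by ring⟩,
        Finset.mem_sub.mpr ⟨0, by simp, 4*a+a, by simp, by ring⟩,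
        Finset.mem_sub.mpr ⟨6*a+a, by simp, 0, by simp, by ring⟩,
        Finset.mem_sub.mpr ⟨0, by simp, 6*a+a, by simp, by ring⟩⟩
    have hcard : ({0, 1*a, -(1*a), 2*a, -(2*a), 3*a, -(3*a), 4*a, -(4*a), 5*a, -(5*a), 7*a, -(7*a)} : Finset ℤ).card = 13 := by
      repeat rw [Finset.card_insert_of_notMem (by
        simp only [Finset.mem_insert, Finset.mem_singleton, not_or]; omega)]
      norm_num
    calc ((({0, 2*a, 3*a, 4*a, 4*a+a, 6*a+a} : Finset ℤ)) + {0, 2*a, 3*a, 4*a, 4*a+a, 6*a+a}).card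
        ≤ 13 := le_trans (Finset.card_le_card hup) ((List.toFinset_card_le _).trans (by simp))
      _ ≤ 13 := by norm_num
      _ = ({0, 1*a, -(1*a), 2*a, -(2*a), 3*a, -(3*a), 4*a, -(4*a), 5*a, -(5*a), 7*a, -(7*a)} : Finset ℤ).card := hcard.symm
      _ ≤ ((({0, 2*a, 3*a, 4*a, 4*a+a, 6*a+a} : Finset ℤ)) - {0, 2*a, 3*a, 4*a, 4*a+a, 6*a+a}).card := Finset.card_le_card hlow
  · by_cases h2 : a = 2*d
    · subst h2
      have hup : (({0, 2*d, 3*d, 4*d, 4*d+2*d, 6*d+2*d} : Finset ℤ) + {0, 2*d, 3*d, 4*d, 4*d+2*d, 6*d+2*d}) ⊆ ([0*d, 2*d, 3*d, 4*d, 5*d, 6*d, 7*d, 8*d, 9*d, 10*d, 11*d, 12*d, 14*d, 16*d] : List ℤ).toFinset := by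
        intro x hx
        simp only [Finset.mem_add, Finset.mem_insert, Finset.mem_singleton] at hx
        obtain ⟨y, hy, z, hz, rfl⟩ := hx
        simp only [List.mem_toFinset, List.mem_cons, List.not_mem_nil, or_false]
        omega
      have hlow : ({0, 1*d, -(1*d), 2*d, -(2*d), 3*d, -(3*d), 4*d, -(4*d), 5*d, -(5*d), 6*d, -(6*d), 8*d, -(8*d)} : Finset ℤ) ⊆ (({0, 2*d, 3*d, 4*d, 4*d+2*d, 6*d+2*d} : Finset ℤ) - {0, 2*d, 3*d, 4*d, 4*d+2*d, 6*d+2*d}) := by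
        simp only [Finset.insert_subset_iff, Finset.singleton_subset_iff]
        exact ⟨Finset.mem_sub.mpr ⟨0, by simp, 0, by simp, by ring⟩,
          Finset.mem_sub.mpr ⟨3*d, by simp, 2*d, by simp, by ring⟩,
          Finset.mem_sub.mpr ⟨2*d, by simp, 3*d, by simp, by ring⟩,
          Finset.mem_sub.mpr ⟨2*d, by simp, 0, by simp, by ring⟩,
          Finset.mem_sub.mpr ⟨0, by simp, 2*d, by simp, by ring⟩,
          Finset.mem_sub.mpr ⟨3*d, by simp, 0, by simp, by ring⟩,
          Finset.mem_sub.mpr ⟨0, by simp, 3*d, by simp, by ring⟩,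
          Finset.mem_sub.mpr ⟨4*d, by simp, 0, by simp, by ring⟩,
          Finset.mem_sub.mpr ⟨0, by simp, 4*d, by simp, by ring⟩,
          Finset.mem_sub.mpr ⟨6*d+2*d, by simp, 3*d, by simp, by ring⟩,
          Finset.mem_sub.mpr ⟨3*d, by simp, 6*d+2*d, by simp, by ring⟩,
          Finset.mem_sub.mpr ⟨4*d+2*d, by simp, 0, by simp, by ring⟩,
          Finset.mem_sub.mpr ⟨0, by simp, 4*d+2*d, by simp, by ring⟩,
          Finset.mem_sub.mpr ⟨6*d+2*d, by simp, 0, by simp, by ring⟩,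
          Finset.mem_sub.mpr ⟨0, by simp, 6*d+2*d, by simp, by ring⟩⟩
      have hcard : ({0, 1*d, -(1*d), 2*d, -(2*d), 3*d, -(3*d), 4*d, -(4*d), 5*d, -(5*d), 6*d, -(6*d), 8*d, -(8*d)} : Finset ℤ).card = 15 := by
        repeat rw [Finset.card_insert_of_notMem (by
          simp only [Finset.mem_insert, Finset.mem_singleton, not_or]; omega)]
        norm_num
      calc ((({0, 2*d, 3*d, 4*d, 4*d+2*d, 6*d+2*d} : Finset ℤ)) + {0, 2*d, 3*d, 4*d, 4*d+2*d, 6*d+2*d}).card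
          ≤ 14 := le_trans (Finset.card_le_card hup) ((List.toFinset_card_le _).trans (by simp))
        _ ≤ 15 := by norm_num
        _ = ({0, 1*d, -(1*d), 2*d, -(2*d), 3*d, -(3*d), 4*d, -(4*d), 5*d, -(5*d), 6*d, -(6*d), 8*d, -(8*d)} : Finset ℤ).card := hcard.symm
        _ ≤ ((({0, 2*d, 3*d, 4*d, 4*d+2*d, 6*d+2*d} : Finset ℤ)) - {0, 2*d, 3*d, 4*d, 4*d+2*d, 6*d+2*d}).card := Finset.card_le_card hlow
    ·
      have hup : (({0, 2*d, 3*d, 4*d, 4*d+a, 6*d+a} : Finset ℤ) + {0, 2*d, 3*d, 4*d, 4*d+a, 6*d+a}) ⊆ ([0, 2*d, 3*d, 4*d, 5*d, 6*d, 7*d, 8*d, 4*d+a, 6*d+a, 7*d+a, 8*d+a, 9*d+a, 10*d+a, 8*d+2*a, 10*d+2*a, 12*d+2*a] : List ℤ).toFinset := by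
        intro x hx
        simp only [Finset.mem_add, Finset.mem_insert, Finset.mem_singleton] at hx
        obtain ⟨y, hy, z, hz, rfl⟩ := hx
        simp only [List.mem_toFinset, List.mem_cons, List.not_mem_nil, or_false]
        omega
      have hlow : ({0, 1*d, -(1*d), 2*d, -(2*d), 3*d, -(3*d), 4*d, -(4*d), 2*d+a, -(2*d+a), 3*d+a, -(3*d+a), 4*d+a, -(4*d+a), 6*d+a, -(6*d+a)} : Finset ℤ) ⊆ (({0, 2*d, 3*d, 4*d, 4*d+a, 6*d+a} : Finset ℤ) - {0, 2*d, 3*d, 4*d, 4*d+a, 6*d+a}) := by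
        simp only [Finset.insert_subset_iff, Finset.singleton_subset_iff]
        exact ⟨Finset.mem_sub.mpr ⟨0, by simp, 0, by simp, by ring⟩,
          Finset.mem_sub.mpr ⟨3*d, by simp, 2*d, by simp, by ring⟩,
          Finset.mem_sub.mpr ⟨2*d, by simp, 3*d, by simp, by ring⟩,
          Finset.mem_sub.mpr ⟨2*d, by simp, 0, by simp, by ring⟩,
          Finset.mem_sub.mpr ⟨0, by simp, 2*d, by simp, by ring⟩,
          Finset.mem_sub.mpr ⟨3*d, by simp, 0, by simp, by ring⟩,
          Finset.mem_sub.mpr ⟨0, by simp, 3*d, by simp, by ring⟩,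
          Finset.mem_sub.mpr ⟨4*d, by simp, 0, by simp, by ring⟩,
          Finset.mem_sub.mpr ⟨0, by simp, 4*d, by simp, by ring⟩,
          Finset.mem_sub.mpr ⟨6*d+a, by simp, 4*d, by simp, by ring⟩,
          Finset.mem_sub.mpr ⟨4*d, by simp, 6*d+a, by simp, by ring⟩,
          Finset.mem_sub.mpr ⟨6*d+a, by simp, 3*d, by simp, by ring⟩,
          Finset.mem_sub.mpr ⟨3*d, by simp, 6*d+a, by simp, by ring⟩,
          Finset.mem_sub.mpr ⟨4*d+a, by simp, 0, by simp, by ring⟩,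
          Finset.mem_sub.mpr ⟨0, by simp, 4*d+a, by simp, by ring⟩,
          Finset.mem_sub.mpr ⟨6*d+a, by simp, 0, by simp, by ring⟩,
          Finset.mem_sub.mpr ⟨0, by simp, 6*d+a, by simp, by ring⟩⟩
      have hcard : ({0, 1*d, -(1*d), 2*d, -(2*d), 3*d, -(3*d), 4*d, -(4*d), 2*d+a, -(2*d+a), 3*d+a, -(3*d+a), 4*d+a, -(4*d+a), 6*d+a, -(6*d+a)} : Finset ℤ).card = 17 := by
        repeat rw [Finset.card_insert_of_notMem (by
          simp only [Finset.mem_insert, Finset.mem_singleton, not_or]; omega)]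
        norm_num
      calc ((({0, 2*d, 3*d, 4*d, 4*d+a, 6*d+a} : Finset ℤ)) + {0, 2*d, 3*d, 4*d, 4*d+a, 6*d+a}).card
          ≤ 17 := le_trans (Finset.card_le_card hup) ((List.toFinset_card_le _).trans (by simp))
        _ ≤ 17 := by norm_num
        _ = ({0, 1*d, -(1*d), 2*d, -(2*d), 3*d, -(3*d), 4*d, -(4*d), 2*d+a, -(2*d+a), 3*d+a, -(3*d+a), 4*d+a, -(4*d+a), 6*d+a, -(6*d+a)} : Finset ℤ).card := hcard.symm
        _ ≤ ((({0, 2*d, 3*d, 4*d, 4*d+a, 6*d+a} : Finset ℤ)) - {0, 2*d, 3*d, 4*d, 4*d+a, 6*d+a}).card := Finset.card_le_card hlow
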